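/- arXiv:1202.3322 — 2 statements merged into one kernel-verified Lean document; each statement's English description precedes it below -/
import Mathlib

section
/- Let A and B be n×n complex Hermitian matrices. Then the decreasing eigenvalue list of A+B is majorized by the sum of the decreasing eigenvalue lists of A and B: for every k with 1 ≤ k ≤ n, ∑_{i=1}^{k} λ_i(A+B) ≤ ∑_{i=1}^{k} λ_i(A) + ∑_{i=1}^{k} λ_i(B). -/
/-!
Ky Fan's maximum principle: for Hermitian `M`, the sum of its `k` largest eigenvalues bounds
`Re tr (Vᴴ M V)` for every isometry `V : 𝕜ᵏ → 𝕜ⁿ`, with equality when the columns of `V` are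
eigenvectors for those eigenvalues. Choosing `V` optimal for `A + B` and splitting
`tr (Vᴴ (A + B) V)` gives the majorization. For the bound, write `V` in an eigenbasis of `M` as `W`:
then `Re tr (Vᴴ M V) = ∑ j, λⱼ dⱼ` with `dⱼ` the diagonal of the projection `W Wᴴ`, so
`0 ≤ dⱼ ≤ 1` and `∑ j, dⱼ = k`, and such a weighted sum is largest with weight one on the `k`
largest eigenvalues.
-/

open Matrix Finset
open scoped ComplexOrder

theorem sum_mul_le_sum_of_forall_le {ι : Type*} [Fintype ι] [DecidableEq ι] {s : Finset ι}
    {μ d : ι → ℝ} (t : ℝ) (hs : ∀ i ∈ s, t ≤ μ i) (hsc : ∀ i ∉ s, μ i ≤ t)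
    (hd0 : ∀ i, 0 ≤ d i) (hd1 : ∀ i, d i ≤ 1) (hd : ∑ i, d i = #s) :
    ∑ i, μ i * d i ≤ ∑ i ∈ s, μ i := by
  have hterm : ∀ i, (μ i - t) * d i ≤ if i ∈ s then μ i - t else 0 := by
    intro i
    split_ifs with hi
    · exact mul_le_of_le_one_right (sub_nonneg.2 (hs i hi)) (hd1 i)
    · exact mul_nonpos_of_nonpos_of_nonneg (sub_nonpos.2 (hsc i hi)) (hd0 i)
  calc ∑ i, μ i * d i = ∑ i, (μ i - t) * d i + t * ∑ i, d i := by
        rw [mul_sum, ← sum_add_distrib]; congr 1; ext i; ring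
    _ ≤ ∑ i, (if i ∈ s then μ i - t else 0) + t * #s := by
        rw [hd]; gcongr with i; exact hterm i
    _ = ∑ i ∈ s, μ i := by
        rw [sum_ite_mem, univ_inter, sum_sub_distrib, sum_const, nsmul_eq_mul]; ring

theorem Fin.sum_mul_le_sum_castLE {n k : ℕ} (hk1 : 1 ≤ k) (hk : k ≤ n) {μ d : Fin n → ℝ}
    (hμ : Antitone μ) (hd0 : ∀ i, 0 ≤ d i) (hd1 : ∀ i, d i ≤ 1) (hd : ∑ i, d i = k) :
    ∑ i, μ i * d i ≤ ∑ i : Fin k, μ (Fin.castLE hk i) := by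
  have hmem : ∀ j : Fin n, j ∈ univ.map (Fin.castLEEmb hk) ↔ (j : ℕ) < k := fun j =>
    ⟨fun h => by obtain ⟨i, -, rfl⟩ := mem_map.1 h; exact i.2,
     fun h => mem_map.2 ⟨⟨j, h⟩, mem_univ _, rfl⟩⟩
  refine (sum_mul_le_sum_of_forall_le (s := univ.map (Fin.castLEEmb hk)) (μ ⟨k - 1, by omega⟩)
    (fun i hi => hμ ?_) (fun i hi => hμ ?_) hd0 hd1 (by simpa using hd)).trans_eq (sum_map _ _ _)
  · show (i : ℕ) ≤ k - 1; have := (hmem i).1 hi; omega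
  · show k - 1 ≤ (i : ℕ); have := mt (hmem i).2 hi; omega

namespace Matrix

variable {𝕜 : Type*} [RCLike 𝕜] {m n : Type*} [Fintype m] [Fintype n] [DecidableEq m]
  [DecidableEq n]

omit [Fintype m] [DecidableEq m] [DecidableEq n] in
theorem conjTranspose_submatrix_mul_mul_submatrix {α : Type*} [CommSemiring α] [StarRing α]
    (U M : Matrix n n α) (σ : m → n) :
    (U.submatrix id σ)ᴴ * M * U.submatrix id σ = (Uᴴ * M * U).submatrix σ σ := by
  rw [submatrix_mul _ _ _ id _ Function.bijective_id,
    submatrix_mul _ _ _ id _ Function.bijective_id, submatrix_id_id, conjTranspose_submatrix]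

theorem posSemidef_one_sub_mul_conjTranspose {W : Matrix n m 𝕜} (hW : Wᴴ * W = 1) :
    (1 - W * Wᴴ).PosSemidef := by
  -- `1 - W Wᴴ` is an orthogonal projection, hence its own Gram matrix.
  have hproj : (1 - W * Wᴴ)ᴴ * (1 - W * Wᴴ) = 1 - W * Wᴴ := by
    rw [conjTranspose_sub, conjTranspose_one, conjTranspose_mul, conjTranspose_conjTranspose,
      sub_mul, one_mul, mul_sub, mul_one, Matrix.mul_assoc, ← Matrix.mul_assoc Wᴴ, hW,
      Matrix.one_mul, sub_self, sub_zero]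
  exact hproj ▸ posSemidef_conjTranspose_mul_self _

omit [DecidableEq m] [DecidableEq n] in
theorem re_diag_mul_conjTranspose_nonneg (W : Matrix n m 𝕜) (j : n) :
    0 ≤ RCLike.re ((W * Wᴴ) j j) :=
  (RCLike.nonneg_iff.1 (posSemidef_self_mul_conjTranspose W).diag_nonneg).1

theorem re_diag_mul_conjTranspose_le_one {W : Matrix n m 𝕜} (hW : Wᴴ * W = 1) (j : n) :
    RCLike.re ((W * Wᴴ) j j) ≤ 1 := by
  have := (RCLike.nonneg_iff.1 ((posSemidef_one_sub_mul_conjTranspose hW).diag_nonneg (i := j))).1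
  simpa using this

omit [DecidableEq n] in
theorem sum_re_diag_mul_conjTranspose {W : Matrix n m 𝕜} (hW : Wᴴ * W = 1) :
    ∑ j, RCLike.re ((W * Wᴴ) j j) = Fintype.card m := by
  rw [← map_sum, show ∑ j, (W * Wᴴ) j j = (Wᴴ * W).trace from trace_mul_comm W Wᴴ, hW, trace_one,
    RCLike.natCast_re]

omit [DecidableEq m] in
theorem re_trace_conjTranspose_mul_diagonal_mul (W : Matrix n m 𝕜) (d : n → ℝ) :
    RCLike.re (Wᴴ * (diagonal (RCLike.ofReal ∘ d) : Matrix n n 𝕜) * W).trace =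
      ∑ j, d j * RCLike.re ((W * Wᴴ) j j) := by
  rw [trace_mul_cycle, Matrix.trace, map_sum]
  simp only [diag_apply, mul_diagonal, Function.comp_apply, RCLike.re_mul_ofReal, mul_comm]

namespace IsHermitian

variable {M : Matrix n n 𝕜} (hM : M.IsHermitian)
include hM

theorem conjTranspose_eigenvectorUnitary_mul_mul :
    (hM.eigenvectorUnitary : Matrix n n 𝕜)ᴴ * M * (hM.eigenvectorUnitary : Matrix n n 𝕜) =
      diagonal (RCLike.ofReal ∘ hM.eigenvalues) := by
  simpa only [Unitary.conjStarAlgAut_star_apply, star_eq_conjTranspose]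
    using hM.conjStarAlgAut_star_eigenvectorUnitary

omit [Fintype m] in
theorem exists_isometry_conj_eq_diagonal {σ : m → n} (hσ : Function.Injective σ) :
    ∃ V : Matrix n m 𝕜, Vᴴ * V = 1 ∧
      Vᴴ * M * V = diagonal (RCLike.ofReal ∘ hM.eigenvalues ∘ σ) := by
  set U : Matrix n n 𝕜 := (hM.eigenvectorUnitary : Matrix n n 𝕜)
  refine ⟨U.submatrix id σ, ?_, ?_⟩
  · rw [← Matrix.mul_one (U.submatrix id σ)ᴴ, conjTranspose_submatrix_mul_mul_submatrix,
      Matrix.mul_one, ← star_eq_conjTranspose, Unitary.coe_star_mul_self, submatrix_one _ hσ]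
  · rw [conjTranspose_submatrix_mul_mul_submatrix, hM.conjTranspose_eigenvectorUnitary_mul_mul,
      submatrix_diagonal _ _ hσ]
    rfl

end IsHermitian

end Matrix

namespace Matrix.IsHermitian

variable {𝕜 : Type*} [RCLike 𝕜] {n k : ℕ} {M : Matrix (Fin n) (Fin n) 𝕜} (hM : M.IsHermitian)
include hM

theorem re_trace_conj_le_sum_castLE (hk1 : 1 ≤ k) (hk : k ≤ n) {μ : Fin n → ℝ}
    (hμ : Antitone μ) (e : Equiv.Perm (Fin n)) (he : ∀ i, μ (e i) = hM.eigenvalues i)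
    {V : Matrix (Fin n) (Fin k) 𝕜} (hV : Vᴴ * V = 1) :
    RCLike.re (Vᴴ * M * V).trace ≤ ∑ i : Fin k, μ (Fin.castLE hk i) := by
  set U : Matrix (Fin n) (Fin n) 𝕜 := (hM.eigenvectorUnitary : Matrix (Fin n) (Fin n) 𝕜)
  set W := Uᴴ * V
  have hU : U * Uᴴ = 1 := Unitary.coe_mul_star_self _
  have hW : Wᴴ * W = 1 := by
    rw [conjTranspose_mul, conjTranspose_conjTranspose, Matrix.mul_assoc, ← Matrix.mul_assoc U, hU,
      Matrix.one_mul, hV]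
  have hconj : Vᴴ * M * V =
      Wᴴ * (diagonal (RCLike.ofReal ∘ hM.eigenvalues) : Matrix (Fin n) (Fin n) 𝕜) * W := by
    conv_lhs => rw [hM.spectral_theorem]
    simp only [Unitary.conjStarAlgAut_apply, W, U, conjTranspose_mul, conjTranspose_conjTranspose,
      Matrix.mul_assoc, star_eq_conjTranspose]
  set d := fun j => RCLike.re ((W * Wᴴ) j j)
  calc RCLike.re (Vᴴ * M * V).trace = ∑ j, hM.eigenvalues j * d j := by
        rw [hconj, re_trace_conjTranspose_mul_diagonal_mul]
    _ = ∑ j, μ j * d (e.symm j) := by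
        rw [← Equiv.sum_comp e (fun j => μ j * d (e.symm j))]
        simp only [he, Equiv.symm_apply_apply]
    _ ≤ ∑ i : Fin k, μ (Fin.castLE hk i) :=
        Fin.sum_mul_le_sum_castLE hk1 hk hμ (fun j => re_diag_mul_conjTranspose_nonneg W _)
          (fun j => re_diag_mul_conjTranspose_le_one hW _)
          (by rw [Equiv.sum_comp e.symm d, sum_re_diag_mul_conjTranspose hW, Fintype.card_fin])

theorem exists_isometry_re_trace_conj_eq_sum_castLE (hk : k ≤ n) {μ : Fin n → ℝ}
    (e : Equiv.Perm (Fin n)) (he : ∀ i, μ (e i) = hM.eigenvalues i) :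
    ∃ V : Matrix (Fin n) (Fin k) 𝕜, Vᴴ * V = 1 ∧
      RCLike.re (Vᴴ * M * V).trace = ∑ i : Fin k, μ (Fin.castLE hk i) := by
  obtain ⟨V, hV, hVMV⟩ :=
    hM.exists_isometry_conj_eq_diagonal (e.symm.injective.comp (Fin.castLE_injective hk))
  refine ⟨V, hV, ?_⟩
  rw [hVMV, trace_diagonal, map_sum]
  refine sum_congr rfl fun i _ => ?_
  simp [← he]

end Matrix.IsHermitian

theorem eigenvalues_add_majorized_general {n : ℕ} (A B : Matrix (Fin n) (Fin n) ℂ)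
    (hA : A.IsHermitian) (hB : B.IsHermitian) (hAB : (A + B).IsHermitian)
    (μA μB μAB : Fin n → ℝ)
    (hμA : Antitone μA) (hμB : Antitone μB)
    (hpA : ∃ e : Equiv.Perm (Fin n), ∀ i, μA (e i) = hA.eigenvalues i)
    (hpB : ∃ e : Equiv.Perm (Fin n), ∀ i, μB (e i) = hB.eigenvalues i)
    (hpAB : ∃ e : Equiv.Perm (Fin n), ∀ i, μAB (e i) = hAB.eigenvalues i) :
    ∀ (k : ℕ), 1 ≤ k → ∀ (hk : k ≤ n),
      ∑ i : Fin k, μAB (Fin.castLE hk i) ≤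
        ∑ i : Fin k, μA (Fin.castLE hk i) + ∑ i : Fin k, μB (Fin.castLE hk i) := by
  intro k hk1 hk
  obtain ⟨eA, heA⟩ := hpA
  obtain ⟨eB, heB⟩ := hpB
  obtain ⟨eAB, heAB⟩ := hpAB
  obtain ⟨V, hV, hVABV⟩ := hAB.exists_isometry_re_trace_conj_eq_sum_castLE hk eAB heAB
  calc ∑ i : Fin k, μAB (Fin.castLE hk i)
      = RCLike.re (Vᴴ * A * V).trace + RCLike.re (Vᴴ * B * V).trace := by
        rw [← hVABV, Matrix.mul_add, Matrix.add_mul, trace_add, map_add]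
    _ ≤ ∑ i : Fin k, μA (Fin.castLE hk i) + ∑ i : Fin k, μB (Fin.castLE hk i) :=
        add_le_add (hA.re_trace_conj_le_sum_castLE hk1 hk hμA eA heA hV)
          (hB.re_trace_conj_le_sum_castLE hk1 hk hμB eB heB hV)

/-- The decreasing eigenvalue list of `A + B` is majorized by the sum of the decreasing
eigenvalue lists of the Hermitian matrices `A` and `B`. -/
theorem eigenvalues_add_majorized {n : ℕ} (A B : Matrix (Fin n) (Fin n) ℂ)
    (hA : A.IsHermitian) (hB : B.IsHermitian) (hAB : (A + B).IsHermitian)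
    (μA μB μAB : Fin n → ℝ)
    (hμA : Antitone μA) (hμB : Antitone μB) (hμAB : Antitone μAB)
    (hpA : ∃ e : Equiv.Perm (Fin n), ∀ i, μA (e i) = hA.eigenvalues i)
    (hpB : ∃ e : Equiv.Perm (Fin n), ∀ i, μB (e i) = hB.eigenvalues i)
    (hpAB : ∃ e : Equiv.Perm (Fin n), ∀ i, μAB (e i) = hAB.eigenvalues i) :
    ∀ (k : ℕ), 1 ≤ k → ∀ (hk : k ≤ n),
      ∑ i : Fin k, μAB (Fin.castLE hk i) ≤
        ∑ i : Fin k, μA (Fin.castLE hk i) + ∑ i : Fin k, μB (Fin.castLE hk i) :=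
  eigenvalues_add_majorized_general A B hA hB hAB μA μB μAB hμA hμB hpA hpB hpAB
end

section
/- Let λ₁, λ₂, λ₃ be reals with 1 ≥ λ₁ ≥ λ₂ ≥ λ₃ > 1/2 and λ₁ + λ₂ + λ₃ ≤ 2. Let y and z be the three-qubit vectors with all phases zero: y_{klm} = 0 for k+l+m odd, y₀₀₀ = √(2(λ₁+λ₂+λ₃−1))/2, y₀₁₁ = √(2(λ₁−λ₂−λ₃+1))/2, y₁₀₁ = √(2(−λ₁+λ₂−λ₃+1))/2, y₁₁₀ = √(2(−λ₁−λ₂+λ₃+1))/2; z_{klm} = 0 for k+l+m even, z₀₀₁ = √(2(λ₁+λ₂−λ₃))/2, z₀₁₀ = √(2(λ₁−λ₂+λ₃))/2, z₁₀₀ = √(2(−λ₁+λ₂+λ₃))/2, z₁₁₁ = √(2(−λ₁−λ₂−λ₃+2))/2. Let σ and τ be the 4×4 matrices on (Fin 2 × Fin 2) obtained from the outer products p_y and p_z by tracing out the third qubit: σ (k,l) (k',l') = ∑_m y_{klm}·conj(y_{k'l'm}) and τ (k,l) (k',l') = ∑_m z_{klm}·conj(z_{k'l'm}). Then: (a) σ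 and τ have the same decreasing eigenvalue lists, λ_i(σ) = λ_i(τ) for all i; (b) Tr₂(σ) = Tr₂(τ) and Tr₁(σ) = Tr₁(τ); but (c) there do NOT exist 2×2 unitary matrices U and V with τ = (U ⊗ V) * σ * (U ⊗ V)ᴴ. -/
/-!
Both `σ` and `τ` are block diagonal with respect to the parity of the first two qubits, because
`y` and `z` are each supported on one parity class of all three indices; each block is rank one,
and the two blocks have traces `λ₃` and `1 - λ₃` (in opposite order for `σ` and `τ`), so both
states have spectrum `{λ₃, 1 - λ₃, 0, 0}`. A direct computation gives the marginals
`diag(λ₁, 1 - λ₁)` and `diag(λ₂, 1 - λ₂)` for both. If `τ = (U ⊗ V) σ (U ⊗ V)ᴴ`, then `U` and `V`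
commute with these marginals, which are nondegenerate since `λ₁, λ₂ > 1/2`; so `U` and `V` are
diagonal and `U ⊗ V` fixes the diagonal of `σ`. But `σ₀₀,₀₀ = (λ₁ + λ₂ + λ₃ - 1)/2` while
`τ₀₀,₀₀ = (λ₁ + λ₂ - λ₃)/2`, and these differ because `λ₃ ≠ 1/2`.
-/

open Matrix Kronecker

/-- Partial trace over the second tensor factor. -/
noncomputable def ptrace2 {α β : Type*} [Fintype β]
    (M : Matrix (α × β) (α × β) ℂ) : Matrix α α ℂ :=
  Matrix.of fun i j => ∑ k : β, M (i, k) (j, k)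

/-- Partial trace over the first tensor factor. -/
noncomputable def ptrace1 {α β : Type*} [Fintype α]
    (M : Matrix (α × β) (α × β) ℂ) : Matrix β β ℂ :=
  Matrix.of fun i j => ∑ k : α, M (k, i) (k, j)

/-- The first solution `y` (all phases zero), supported on even indices. -/
noncomputable def ySol (l1 l2 l3 : ℝ) : Fin 2 × Fin 2 × Fin 2 → ℂ := fun v =>
  ![![![((Real.sqrt (2 * (l1 + l2 + l3 - 1)) / 2 : ℝ) : ℂ), 0],
     ![0, ((Real.sqrt (2 * (l1 - l2 - l3 + 1)) / 2 : ℝ) : ℂ)]],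
    ![![0, ((Real.sqrt (2 * (-l1 + l2 - l3 + 1)) / 2 : ℝ) : ℂ)],
     ![((Real.sqrt (2 * (-l1 - l2 + l3 + 1)) / 2 : ℝ) : ℂ), 0]]] v.1 v.2.1 v.2.2

/-- The second solution `z` (all phases zero), supported on odd indices. -/
noncomputable def zSol (l1 l2 l3 : ℝ) : Fin 2 × Fin 2 × Fin 2 → ℂ := fun v =>
  ![![![0, ((Real.sqrt (2 * (l1 + l2 - l3)) / 2 : ℝ) : ℂ)],
     ![((Real.sqrt (2 * (l1 - l2 + l3)) / 2 : ℝ) : ℂ), 0]],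
    ![![((Real.sqrt (2 * (-l1 + l2 + l3)) / 2 : ℝ) : ℂ), 0],
     ![0, ((Real.sqrt (2 * (-l1 - l2 - l3 + 2)) / 2 : ℝ) : ℂ)]]] v.1 v.2.1 v.2.2

open Polynomial

theorem ptrace2_kronecker_conj {α β : Type*} [Fintype α] [Fintype β] [DecidableEq β]
    (U : Matrix α α ℂ) {V : Matrix β β ℂ} (hV : Vᴴ * V = 1) (M : Matrix (α × β) (α × β) ℂ) :
    ptrace2 ((U ⊗ₖ V) * M * (U ⊗ₖ V)ᴴ) = U * ptrace2 M * Uᴴ := by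
  have hVorth : ∀ b d, ∑ k, V k b * star (V k d) = if b = d then 1 else 0 := fun b d => by
    simpa [mul_apply, one_apply, mul_comm, eq_comm] using congrFun (congrFun hV d) b
  ext i j
  simp only [ptrace2, of_apply, mul_apply, conjTranspose_apply, kroneckerMap_apply,
    Fintype.sum_prod_type, star_mul', Finset.sum_mul, Finset.mul_sum]
  rw [Finset.sum_comm]
  refine Finset.sum_congr rfl fun c _ => ?_
  calc _ = ∑ a : α, ∑ b : β, ∑ d : β,
        U i a * M (a, b) (c, d) * star (U j c) * ∑ k : β, V k b * star (V k d) := by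
        simp only [Finset.mul_sum]
        rw [Finset.sum_comm_cycle]
        refine Finset.sum_congr rfl fun a _ => ?_
        rw [Finset.sum_comm_cycle]
        refine Finset.sum_congr rfl fun b _ => ?_
        rw [Finset.sum_comm]
        exact Finset.sum_congr rfl fun d _ => Finset.sum_congr rfl fun k _ => by ring
    _ = _ := by
        simp_rw [hVorth, mul_ite, mul_one, mul_zero, Finset.sum_ite_eq, Finset.mem_univ, if_true]

theorem ptrace1_eq_ptrace2_submatrix_swap {α β : Type*} [Fintype α]
    (M : Matrix (α × β) (α × β) ℂ) : ptrace1 M = ptrace2 (M.submatrix Prod.swap Prod.swap) :=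
  rfl

theorem ptrace1_kronecker_conj {α β : Type*} [Fintype α] [Fintype β] [DecidableEq α]
    {U : Matrix α α ℂ} (V : Matrix β β ℂ) (hU : Uᴴ * U = 1) (M : Matrix (α × β) (α × β) ℂ) :
    ptrace1 ((U ⊗ₖ V) * M * (U ⊗ₖ V)ᴴ) = V * ptrace1 M * Vᴴ := by
  have hswap : (U ⊗ₖ V).submatrix Prod.swap Prod.swap = V ⊗ₖ U := by
    ext; simp [mul_comm]
  rw [ptrace1_eq_ptrace2_submatrix_swap, ptrace1_eq_ptrace2_submatrix_swap,
    ← ptrace2_kronecker_conj V hU, ← hswap, conjTranspose_submatrix]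
  simp only [← Equiv.coe_prodComm, submatrix_mul_equiv]

theorem Matrix.kronecker_conjTranspose_mul_self {α β : Type*} [Fintype α] [Fintype β]
    [DecidableEq α] [DecidableEq β] {U : Matrix α α ℂ} {V : Matrix β β ℂ}
    (hU : Uᴴ * U = 1) (hV : Vᴴ * V = 1) : (U ⊗ₖ V)ᴴ * (U ⊗ₖ V) = 1 := by
  rw [conjTranspose_kronecker, ← mul_kronecker_mul, hU, hV, one_kronecker_one]

theorem Matrix.IsDiag.of_conj_diagonal_eq {n : Type*} [Fintype n] [DecidableEq n]
    {d : n → ℂ} (hd : Function.Injective d) {U : Matrix n n ℂ} (hU : Uᴴ * U = 1)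
    (h : U * diagonal d * Uᴴ = diagonal d) : U.IsDiag := by
  have hcomm : diagonal d * U = U * diagonal d :=
    calc diagonal d * U = U * diagonal d * Uᴴ * U := by rw [h]
      _ = U * diagonal d := by rw [mul_assoc, hU, mul_one]
  intro i j hij
  have hij' := congrFun (congrFun hcomm i) j
  rw [diagonal_mul, mul_diagonal] at hij'
  exact (mul_eq_zero.mp (by linear_combination hij' : (d i - d j) * U i j = 0)).resolve_left
    (sub_ne_zero.mpr (hd.ne hij))

theorem Matrix.IsDiag.diag_mul_mul_conjTranspose {n : Type*} [Fintype n] [DecidableEq n]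
    {W : Matrix n n ℂ} (hW : W.IsDiag) (hWu : Wᴴ * W = 1) (M : Matrix n n ℂ) :
    (W * M * Wᴴ).diag = M.diag := by
  ext i
  rw [← hW.diagonal_diag] at hWu ⊢
  have hi := congrFun (congrFun hWu i) i
  simp only [diagonal_conjTranspose, diagonal_mul_diagonal, diagonal_apply_eq, one_apply_eq,
    Pi.star_apply, diag_apply] at hi
  simp only [diag_apply, diagonal_conjTranspose, diagonal_mul, mul_diagonal, Pi.star_apply]
  linear_combination M i i * hi

theorem diag_eq_of_eq_kronecker_conj {α β : Type*} [Fintype α] [Fintype β] [DecidableEq α]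
    [DecidableEq β] {σ τ : Matrix (α × β) (α × β) ℂ} {U : Matrix α α ℂ} {V : Matrix β β ℂ}
    (hU : Uᴴ * U = 1) (hV : Vᴴ * V = 1) (h : τ = (U ⊗ₖ V) * σ * (U ⊗ₖ V)ᴴ)
    {d : α → ℂ} {e : β → ℂ} (hd : Function.Injective d) (he : Function.Injective e)
    (hσ₂ : ptrace2 σ = diagonal d) (hτ₂ : ptrace2 τ = diagonal d)
    (hσ₁ : ptrace1 σ = diagonal e) (hτ₁ : ptrace1 τ = diagonal e) : τ.diag = σ.diag := by
  have hUdiag : U.IsDiag := .of_conj_diagonal_eq hd hU <| by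
    rw [← hσ₂, ← ptrace2_kronecker_conj U hV, ← h, hτ₂, hσ₂]
  have hVdiag : V.IsDiag := .of_conj_diagonal_eq he hV <| by
    rw [← hσ₁, ← ptrace1_kronecker_conj V hU, ← h, hτ₁, hσ₁]
  rw [h]
  exact (hUdiag.kronecker hVdiag).diag_mul_mul_conjTranspose
    (kronecker_conjTranspose_mul_self hU hV) σ

theorem Multiset.map_univ_val_eq_of_comp_equiv {ι κ α : Type*} [Fintype ι] [Fintype κ]
    {μ : κ → α} {f : ι → α} (e : ι ≃ κ) (h : ∀ i, μ (e i) = f i) :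
    Finset.univ.val.map μ = Finset.univ.val.map f := by
  rw [← Multiset.map_univ_val_equiv e, Multiset.map_map]
  exact Multiset.map_congr rfl fun i _ => h i

theorem Antitone.eq_of_map_univ_val_eq {α : Type*} [PartialOrder α] {k : ℕ} {μ ν : Fin k → α}
    (hμ : Antitone μ) (hν : Antitone ν) (h : Finset.univ.val.map μ = Finset.univ.val.map ν) :
    μ = ν := by
  rw [Fin.univ_val_map, Fin.univ_val_map, Multiset.coe_eq_coe] at h
  exact List.ofFn_injective (h.eq_of_sortedGE hμ.sortedGE_ofFn hν.sortedGE_ofFn)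

theorem Matrix.IsHermitian.map_eigenvalues_eq_of_charpoly_eq {n : Type*} [Fintype n]
    [DecidableEq n] {A B : Matrix n n ℂ} (hA : A.IsHermitian) (hB : B.IsHermitian)
    (h : A.charpoly = B.charpoly) :
    Finset.univ.val.map hA.eigenvalues = Finset.univ.val.map hB.eigenvalues := by
  have hroots := hA.roots_charpoly_eq_eigenvalues
  rw [h, hB.roots_charpoly_eq_eigenvalues, ← Multiset.map_map, ← Multiset.map_map] at hroots
  exact (Multiset.map_injective RCLike.ofReal_injective hroots).symm

theorem Matrix.IsHermitian.eq_of_antitone_of_charpoly_eq {n : Type*} [Fintype n]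
    [DecidableEq n] {A B : Matrix n n ℂ} (hA : A.IsHermitian) (hB : B.IsHermitian)
    (h : A.charpoly = B.charpoly) {k : ℕ} {μ ν : Fin k → ℝ} (hμ : Antitone μ)
    (hν : Antitone ν) (e e' : n ≃ Fin k) (he : ∀ i, μ (e i) = hA.eigenvalues i)
    (he' : ∀ i, ν (e' i) = hB.eigenvalues i) : μ = ν :=
  hμ.eq_of_map_univ_val_eq hν <| by
    rw [Multiset.map_univ_val_eq_of_comp_equiv e he, hA.map_eigenvalues_eq_of_charpoly_eq hB h,
      Multiset.map_univ_val_eq_of_comp_equiv e' he']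

theorem charpoly_vecMulVec_fin_two {R : Type*} [CommRing R] (u v : Fin 2 → R) :
    (vecMulVec u v).charpoly = X * (X - C (u ⬝ᵥ v)) := by
  rw [charpoly_vecMulVec, Fintype.card_fin, smul_eq_C_mul]
  ring

def reducedState (x : Fin 2 × Fin 2 × Fin 2 → ℂ) : Matrix (Fin 2 × Fin 2) (Fin 2 × Fin 2) ℂ :=
  of fun p q => ∑ m, x (p.1, p.2, m) * star (x (q.1, q.2, m))

def parityEquiv : Fin 2 × Fin 2 ≃ Fin 2 ⊕ Fin 2 where
  toFun p := if p.1 = p.2 then .inl p.1 else .inr p.1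
  invFun := Sum.elim (fun k => (k, k)) (fun k => (k, k + 1))
  left_inv := by decide
  right_inv := by decide

/-- On the support `k + l + m = s` the third index is determined by the first two, so each parity
class of the first two indices carries a rank-one block. -/
theorem reindex_parityEquiv_reducedState {x : Fin 2 × Fin 2 × Fin 2 → ℂ} (s : Fin 2)
    (hx : ∀ k l m, k + l + m ≠ s → x (k, l, m) = 0) :
    reindex parityEquiv parityEquiv (reducedState x) =
      fromBlocks (vecMulVec (fun k => x (k, k, s)) (star fun k => x (k, k, s))) 0 0
        (vecMulVec (fun k => x (k, k + 1, s + 1)) (star fun k => x (k, k + 1, s + 1))) := by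
  fin_cases s <;> ext (i | i) (j | j) <;> fin_cases i <;> fin_cases j <;>
    simp [reducedState, parityEquiv, vecMulVec_apply, Fin.sum_univ_two, hx]

theorem charpoly_reducedState {x : Fin 2 × Fin 2 × Fin 2 → ℂ} (s : Fin 2)
    (hx : ∀ k l m, k + l + m ≠ s → x (k, l, m) = 0) :
    (reducedState x).charpoly =
      X * (X - C (∑ k, x (k, k, s) * star (x (k, k, s)))) *
        (X * (X - C (∑ k, x (k, k + 1, s + 1) * star (x (k, k + 1, s + 1))))) := by
  rw [← charpoly_reindex parityEquiv, reindex_parityEquiv_reducedState s hx,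
    charpoly_fromBlocks_zero₁₂, charpoly_vecMulVec_fin_two, charpoly_vecMulVec_fin_two]
  rfl

theorem ofReal_half_sqrt_two_mul_mul_star {x : ℝ} (hx : 0 ≤ x) :
    ((√(2 * x) / 2 : ℝ) : ℂ) * star ((√(2 * x) / 2 : ℝ) : ℂ) = ((x / 2 : ℝ) : ℂ) := by
  rw [Complex.star_def, Complex.conj_ofReal, ← Complex.ofReal_mul, div_mul_div_comm,
    Real.mul_self_sqrt (by positivity)]
  ring_nf

theorem injective_vec_one_sub {a : ℝ} (ha : a ≠ 1 / 2) :
    Function.Injective ![(a : ℂ), 1 - a] := by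
  have : (a : ℂ) ≠ 1 - a := by exact_mod_cast fun h => ha (by linarith)
  simp [this]

theorem ySol_eq_zero (l1 l2 l3 : ℝ) (k l m : Fin 2) (h : k + l + m ≠ 0) :
    ySol l1 l2 l3 (k, l, m) = 0 := by
  fin_cases k <;> fin_cases l <;> fin_cases m <;> simp_all [ySol]

theorem zSol_eq_zero (l1 l2 l3 : ℝ) (k l m : Fin 2) (h : k + l + m ≠ 1) :
    zSol l1 l2 l3 (k, l, m) = 0 := by
  fin_cases k <;> fin_cases l <;> fin_cases m <;> simp_all [zSol]

section Solutions

variable {l1 l2 l3 : ℝ}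

theorem charpoly_reducedState_ySol (h1 : 0 ≤ l1 + l2 + l3 - 1) (h2 : 0 ≤ l1 - l2 - l3 + 1)
    (h3 : 0 ≤ -l1 + l2 - l3 + 1) (h4 : 0 ≤ -l1 - l2 + l3 + 1) :
    (reducedState (ySol l1 l2 l3)).charpoly =
      X * (X - C (l3 : ℂ)) * (X * (X - C (1 - l3 : ℂ))) := by
  have hw0 : ∑ k, ySol l1 l2 l3 (k, k, 0) * star (ySol l1 l2 l3 (k, k, 0)) = l3 := by
    simp only [ySol, Fin.sum_univ_two, Fin.isValue, cons_val_zero, cons_val_one,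
      ofReal_half_sqrt_two_mul_mul_star, h1, h4]
    push_cast; ring
  have hw1 : ∑ k, ySol l1 l2 l3 (k, k + 1, 0 + 1) * star (ySol l1 l2 l3 (k, k + 1, 0 + 1)) =
      1 - l3 := by
    simp only [ySol, Fin.sum_univ_two, Fin.isValue, Fin.reduceAdd, cons_val_zero, cons_val_one,
      ofReal_half_sqrt_two_mul_mul_star, h2, h3]
    push_cast; ring
  rw [charpoly_reducedState 0 (ySol_eq_zero l1 l2 l3), hw0, hw1]

theorem charpoly_reducedState_zSol (h1 : 0 ≤ l1 + l2 - l3) (h2 : 0 ≤ l1 - l2 + l3)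
    (h3 : 0 ≤ -l1 + l2 + l3) (h4 : 0 ≤ -l1 - l2 - l3 + 2) :
    (reducedState (zSol l1 l2 l3)).charpoly =
      X * (X - C (1 - l3 : ℂ)) * (X * (X - C (l3 : ℂ))) := by
  have hw0 : ∑ k, zSol l1 l2 l3 (k, k, 1) * star (zSol l1 l2 l3 (k, k, 1)) = 1 - l3 := by
    simp only [zSol, Fin.sum_univ_two, Fin.isValue, cons_val_zero, cons_val_one,
      ofReal_half_sqrt_two_mul_mul_star, h1, h4]
    push_cast; ring
  have hw1 : ∑ k, zSol l1 l2 l3 (k, k + 1, 1 + 1) * star (zSol l1 l2 l3 (k, k + 1, 1 + 1)) =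
      l3 := by
    simp only [zSol, Fin.sum_univ_two, Fin.isValue, Fin.reduceAdd, cons_val_zero, cons_val_one,
      ofReal_half_sqrt_two_mul_mul_star, h2, h3]
    push_cast; ring
  rw [charpoly_reducedState 1 (zSol_eq_zero l1 l2 l3), hw0, hw1]

theorem ptrace2_reducedState_ySol (h1 : 0 ≤ l1 + l2 + l3 - 1) (h2 : 0 ≤ l1 - l2 - l3 + 1)
    (h3 : 0 ≤ -l1 + l2 - l3 + 1) (h4 : 0 ≤ -l1 - l2 + l3 + 1) :
    ptrace2 (reducedState (ySol l1 l2 l3)) = diagonal ![(l1 : ℂ), 1 - l1] := by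
  ext i j
  fin_cases i <;> fin_cases j <;>
    simp only [ptrace2, reducedState, ySol, of_apply, diagonal_apply, Fin.sum_univ_two,
      Fin.zero_eta, Fin.mk_one, Fin.isValue, cons_val_zero, cons_val_one, star_zero, mul_zero,
      zero_mul, add_zero, zero_add, ofReal_half_sqrt_two_mul_mul_star, h1, h2, h3, h4,
      Fin.reduceEq, if_true, if_false] <;>
    push_cast <;> ring

theorem ptrace1_reducedState_ySol (h1 : 0 ≤ l1 + l2 + l3 - 1) (h2 : 0 ≤ l1 - l2 - l3 + 1)
    (h3 : 0 ≤ -l1 + l2 - l3 + 1) (h4 : 0 ≤ -l1 - l2 + l3 + 1) :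
    ptrace1 (reducedState (ySol l1 l2 l3)) = diagonal ![(l2 : ℂ), 1 - l2] := by
  ext i j
  fin_cases i <;> fin_cases j <;>
    simp only [ptrace1, reducedState, ySol, of_apply, diagonal_apply, Fin.sum_univ_two,
      Fin.zero_eta, Fin.mk_one, Fin.isValue, cons_val_zero, cons_val_one, star_zero, mul_zero,
      zero_mul, add_zero, zero_add, ofReal_half_sqrt_two_mul_mul_star, h1, h2, h3, h4,
      Fin.reduceEq, if_true, if_false] <;>
    push_cast <;> ring

theorem ptrace2_reducedState_zSol (h1 : 0 ≤ l1 + l2 - l3) (h2 : 0 ≤ l1 - l2 + l3)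
    (h3 : 0 ≤ -l1 + l2 + l3) (h4 : 0 ≤ -l1 - l2 - l3 + 2) :
    ptrace2 (reducedState (zSol l1 l2 l3)) = diagonal ![(l1 : ℂ), 1 - l1] := by
  ext i j
  fin_cases i <;> fin_cases j <;>
    simp only [ptrace2, reducedState, zSol, of_apply, diagonal_apply, Fin.sum_univ_two,
      Fin.zero_eta, Fin.mk_one, Fin.isValue, cons_val_zero, cons_val_one, star_zero, mul_zero,
      zero_mul, add_zero, zero_add, ofReal_half_sqrt_two_mul_mul_star, h1, h2, h3, h4,
      Fin.reduceEq, if_true, if_false] <;>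
    push_cast <;> ring

theorem ptrace1_reducedState_zSol (h1 : 0 ≤ l1 + l2 - l3) (h2 : 0 ≤ l1 - l2 + l3)
    (h3 : 0 ≤ -l1 + l2 + l3) (h4 : 0 ≤ -l1 - l2 - l3 + 2) :
    ptrace1 (reducedState (zSol l1 l2 l3)) = diagonal ![(l2 : ℂ), 1 - l2] := by
  ext i j
  fin_cases i <;> fin_cases j <;>
    simp only [ptrace1, reducedState, zSol, of_apply, diagonal_apply, Fin.sum_univ_two,
      Fin.zero_eta, Fin.mk_one, Fin.isValue, cons_val_zero, cons_val_one, star_zero, mul_zero,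
      zero_mul, add_zero, zero_add, ofReal_half_sqrt_two_mul_mul_star, h1, h2, h3, h4,
      Fin.reduceEq, if_true, if_false] <;>
    push_cast <;> ring

theorem reducedState_ySol_apply_zero (h1 : 0 ≤ l1 + l2 + l3 - 1) :
    reducedState (ySol l1 l2 l3) (0, 0) (0, 0) = ((l1 + l2 + l3 - 1) / 2 : ℝ) := by
  simp only [reducedState, ySol, of_apply, Fin.sum_univ_two, Fin.isValue, cons_val_zero,
    cons_val_one, star_zero, mul_zero, add_zero, ofReal_half_sqrt_two_mul_mul_star, h1]

theorem reducedState_zSol_apply_zero (h1 : 0 ≤ l1 + l2 - l3) :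
    reducedState (zSol l1 l2 l3) (0, 0) (0, 0) = ((l1 + l2 - l3) / 2 : ℝ) := by
  simp only [reducedState, zSol, of_apply, Fin.sum_univ_two, Fin.isValue, cons_val_zero,
    cons_val_one, star_zero, mul_zero, zero_add, ofReal_half_sqrt_two_mul_mul_star, h1]

end Solutions

theorem two_qubit_mixed_not_locally_unitarily_equivalent_general (l1 l2 l3 : ℝ)
    (h12 : l2 ≤ l1) (h23 : l3 ≤ l2) (hl3 : 1 / 2 < l3)
    (hsum : l1 + l2 + l3 ≤ 2)
    (σ τ : Matrix (Fin 2 × Fin 2) (Fin 2 × Fin 2) ℂ)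
    (hσ : ∀ p q : Fin 2 × Fin 2,
      σ p q = ∑ m : Fin 2, ySol l1 l2 l3 (p.1, p.2, m) * star (ySol l1 l2 l3 (q.1, q.2, m)))
    (hτ : ∀ p q : Fin 2 × Fin 2,
      τ p q = ∑ m : Fin 2, zSol l1 l2 l3 (p.1, p.2, m) * star (zSol l1 l2 l3 (q.1, q.2, m)))
    (hσh : σ.IsHermitian) (hτh : τ.IsHermitian) :
    (∀ (μ ν : Fin (Fintype.card (Fin 2 × Fin 2)) → ℝ),
        Antitone μ → Antitone ν →
        (∃ e : (Fin 2 × Fin 2) ≃ Fin (Fintype.card (Fin 2 × Fin 2)),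
          ∀ i, μ (e i) = hσh.eigenvalues i) →
        (∃ e : (Fin 2 × Fin 2) ≃ Fin (Fintype.card (Fin 2 × Fin 2)),
          ∀ i, ν (e i) = hτh.eigenvalues i) →
        μ = ν) ∧
    ptrace2 σ = ptrace2 τ ∧ ptrace1 σ = ptrace1 τ ∧
    ¬ ∃ (U V : Matrix (Fin 2) (Fin 2) ℂ),
        Uᴴ * U = 1 ∧ U * Uᴴ = 1 ∧ Vᴴ * V = 1 ∧ V * Vᴴ = 1 ∧
        τ = (U ⊗ₖ V) * σ * (U ⊗ₖ V)ᴴ := by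
  obtain rfl : σ = reducedState (ySol l1 l2 l3) := Matrix.ext hσ
  obtain rfl : τ = reducedState (zSol l1 l2 l3) := Matrix.ext hτ
  obtain ⟨y1, y2, y3, y4⟩ : 0 ≤ l1 + l2 + l3 - 1 ∧ 0 ≤ l1 - l2 - l3 + 1 ∧
      0 ≤ -l1 + l2 - l3 + 1 ∧ 0 ≤ -l1 - l2 + l3 + 1 := by
    refine ⟨?_, ?_, ?_, ?_⟩ <;> linarith
  obtain ⟨z1, z2, z3, z4⟩ : 0 ≤ l1 + l2 - l3 ∧ 0 ≤ l1 - l2 + l3 ∧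
      0 ≤ -l1 + l2 + l3 ∧ 0 ≤ -l1 - l2 - l3 + 2 := by
    refine ⟨?_, ?_, ?_, ?_⟩ <;> linarith
  refine ⟨?_, ?_, ?_, ?_⟩
  · rintro μ ν hμ hν ⟨e, he⟩ ⟨e', he'⟩
    refine hσh.eq_of_antitone_of_charpoly_eq hτh ?_ hμ hν e e' he he'
    rw [charpoly_reducedState_ySol y1 y2 y3 y4, charpoly_reducedState_zSol z1 z2 z3 z4]
    ring
  · rw [ptrace2_reducedState_ySol y1 y2 y3 y4, ptrace2_reducedState_zSol z1 z2 z3 z4]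
  · rw [ptrace1_reducedState_ySol y1 y2 y3 y4, ptrace1_reducedState_zSol z1 z2 z3 z4]
  · rintro ⟨U, V, hU, -, hV, -, hUV⟩
    have hdiag := congrFun (diag_eq_of_eq_kronecker_conj hU hV hUV
      (injective_vec_one_sub (by linarith : 1 / 2 < l1).ne')
      (injective_vec_one_sub (by linarith : 1 / 2 < l2).ne')
      (ptrace2_reducedState_ySol y1 y2 y3 y4) (ptrace2_reducedState_zSol z1 z2 z3 z4)
      (ptrace1_reducedState_ySol y1 y2 y3 y4) (ptrace1_reducedState_zSol z1 z2 z3 z4)) (0, 0)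
    rw [diag_apply, diag_apply, reducedState_zSol_apply_zero z1,
      reducedState_ySol_apply_zero y1] at hdiag
    linarith [Complex.ofReal_injective hdiag]

/-- The two-qubit mixed states `σ` and `τ` obtained from the pure states `y` and `z` by
tracing out the third qubit have the same spectrum and the same partial traces, yet are
not equivalent under local unitary transformations. -/
theorem two_qubit_mixed_not_locally_unitarily_equivalent (l1 l2 l3 : ℝ)
    (hl1 : l1 ≤ 1) (h12 : l2 ≤ l1) (h23 : l3 ≤ l2) (hl3 : 1 / 2 < l3)
    (hsum : l1 + l2 + l3 ≤ 2)
    (σ τ : Matrix (Fin 2 × Fin 2) (Fin 2 × Fin 2) ℂ)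
    (hσ : ∀ p q : Fin 2 × Fin 2,
      σ p q = ∑ m : Fin 2, ySol l1 l2 l3 (p.1, p.2, m) * star (ySol l1 l2 l3 (q.1, q.2, m)))
    (hτ : ∀ p q : Fin 2 × Fin 2,
      τ p q = ∑ m : Fin 2, zSol l1 l2 l3 (p.1, p.2, m) * star (zSol l1 l2 l3 (q.1, q.2, m)))
    (hσh : σ.IsHermitian) (hτh : τ.IsHermitian) :
    (∀ (μ ν : Fin (Fintype.card (Fin 2 × Fin 2)) → ℝ),
        Antitone μ → Antitone ν →
        (∃ e : (Fin 2 × Fin 2) ≃ Fin (Fintype.card (Fin 2 × Fin 2)),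
          ∀ i, μ (e i) = hσh.eigenvalues i) →
        (∃ e : (Fin 2 × Fin 2) ≃ Fin (Fintype.card (Fin 2 × Fin 2)),
          ∀ i, ν (e i) = hτh.eigenvalues i) →
        μ = ν) ∧
    ptrace2 σ = ptrace2 τ ∧ ptrace1 σ = ptrace1 τ ∧
    ¬ ∃ (U V : Matrix (Fin 2) (Fin 2) ℂ),
        Uᴴ * U = 1 ∧ U * Uᴴ = 1 ∧ Vᴴ * V = 1 ∧ V * Vᴴ = 1 ∧
        τ = (U ⊗ₖ V) * σ * (U ⊗ₖ V)ᴴ :=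
  two_qubit_mixed_not_locally_unitarily_equivalent_general l1 l2 l3 h12 h23 hl3 hsum σ τ hσ hτ hσh
    hτh
end
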